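/- arXiv:1507.04692 — 4 statements merged into one kernel-verified Lean document; each statement's English description precedes it below -/
import Mathlib

section
/- Let (X, ≤) be a partially ordered set equipped with a metric d such that (X, d) is a complete metric space. Let F : X × X → X be a continuous mapping having the mixed monotone property on X. Assume that for all x, y, u, v ∈ X with x ≥ u and y ≤ v, one has d(F(x,y), F(u,v)) ≤ δ(x,y,u,v) · [d(x,u) + d(y,v)], where δ(x,y,u,v) = [d(x,F(u,v)) + d(y,F(v,u)) + d(u,F(x,y)) + d(v,F(y,x))] / (1 + 2[d(x,F(x,y)) + d(y,F(y,x)) + d(u,F(u,v)) + d(v,F(v,u))]). If there exist x₀, y₀ ∈ X such that x₀ ≤ F(x₀, y₀) and y₀ ≥ F(y₀, x₀), then F has at least one coupled fixed point, i.e., there exist x, y ∈ X with x = F(x,y) and y = F(y,x). -/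
/-- Coupled fixed point theorem for a continuous mixed-monotone mapping
`F` on a partially ordered complete metric space `X`, satisfying the rational-type
contractive condition with coefficient `δ(x,y,u,v)`. -/
theorem coupled_fixed_point_exists
    {X : Type*} [MetricSpace X] [CompleteSpace X] [PartialOrder X]
    (F : X → X → X)
    (hcont : Continuous fun p : X × X => F p.1 p.2)
    (hmono : ∀ y : X, Monotone fun x => F x y)
    (hanti : ∀ x : X, Antitone fun y => F x y)
    (hF : ∀ x y u v : X, u ≤ x → y ≤ v →
      dist (F x y) (F u v) ≤
        (dist x (F u v) + dist y (F v u) + dist u (F x y) + dist v (F y x)) /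
          (1 + 2 * (dist x (F x y) + dist y (F y x) + dist u (F u v) + dist v (F v u))) *
        (dist x u + dist y v))
    (x₀ y₀ : X) (hx₀ : x₀ ≤ F x₀ y₀) (hy₀ : F y₀ x₀ ≤ y₀) :
    ∃ x y : X, F x y = x ∧ F y x = y := by
  classical
  -- the Picard-type iteration
  let p : ℕ → X × X := fun n => Nat.rec (x₀, y₀) (fun _ q => (F q.1 q.2, F q.2 q.1)) n
  let xs : ℕ → X := fun n => (p n).1
  let ys : ℕ → X := fun n => (p n).2
  have hx : ∀ n, xs (n + 1) = F (xs n) (ys n) := fun n => rfl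
  have hy : ∀ n, ys (n + 1) = F (ys n) (xs n) := fun n => rfl
  -- monotonicity of the iterates
  have hord : ∀ n, xs n ≤ xs (n + 1) ∧ ys (n + 1) ≤ ys n := by
    intro n
    induction n with
    | zero => exact ⟨hx₀, hy₀⟩
    | succ n ih =>
      refine ⟨?_, ?_⟩
      · rw [hx n, hx (n + 1)]
        exact le_trans (hmono (ys n) ih.1) (hanti (xs (n + 1)) ih.2)
      · rw [hy n, hy (n + 1)]
        exact le_trans (hmono (xs (n + 1)) ih.2) (hanti (ys n) ih.1)
  -- successive step distances
  set D : ℕ → ℝ := fun n => dist (xs (n + 1)) (xs n) + dist (ys (n + 1)) (ys n) with hD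
  have hDnonneg : ∀ n, 0 ≤ D n := fun n => by positivity
  -- the key polynomial inequality
  have hkey : ∀ n, D (n + 1) * (1 + 2 * (D n + D (n + 1))) ≤ 2 * (D n + D (n + 1)) * D n := by
    intro n
    have h1 := hF (xs (n + 1)) (ys (n + 1)) (xs n) (ys n) (hord n).1 (hord n).2
    have h2 := hF (ys n) (xs n) (ys (n + 1)) (xs (n + 1)) (hord n).2 (hord n).1
    simp only [← hx, ← hy] at h1 h2
    simp only [dist_self, add_zero, zero_add] at h1 h2
    rw [dist_comm (xs n) (xs (n + 2)), dist_comm (ys n) (ys (n + 2)),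
      dist_comm (xs (n + 1)) (xs (n + 2)), dist_comm (ys (n + 1)) (ys (n + 2)),
      dist_comm (xs n) (xs (n + 1)), dist_comm (ys n) (ys (n + 1))] at h1
    rw [dist_comm (ys n) (ys (n + 2)), dist_comm (xs n) (xs (n + 2)),
      dist_comm (ys n) (ys (n + 1)), dist_comm (xs n) (xs (n + 1)),
      dist_comm (ys (n + 1)) (ys (n + 2)), dist_comm (xs (n + 1)) (xs (n + 2))] at h2
    set a := dist (xs (n + 1)) (xs n) with ha
    set b := dist (ys (n + 1)) (ys n) with hb
    set a' := dist (xs (n + 2)) (xs (n + 1)) with ha'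
    set b' := dist (ys (n + 2)) (ys (n + 1)) with hb'
    set c := dist (xs (n + 2)) (xs n) with hc
    set d := dist (ys (n + 2)) (ys n) with hdd
    have htc : c ≤ a' + a := by
      rw [hc, ha, ha']
      calc dist (xs (n + 2)) (xs n) ≤ dist (xs (n + 2)) (xs (n + 1)) + dist (xs (n + 1)) (xs n) :=
            dist_triangle _ _ _
        _ = _ := rfl
    have htd : d ≤ b' + b := by
      rw [hdd, hb, hb']
      calc dist (ys (n + 2)) (ys n) ≤ dist (ys (n + 2)) (ys (n + 1)) + dist (ys (n + 1)) (ys n) :=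
            dist_triangle _ _ _
        _ = _ := rfl
    have ha0 : 0 ≤ a := dist_nonneg
    have hb0 : 0 ≤ b := dist_nonneg
    have ha'0 : 0 ≤ a' := dist_nonneg
    have hb'0 : 0 ≤ b' := dist_nonneg
    have hden1 : (0:ℝ) < 1 + 2 * (a' + b' + a + b) := by positivity
    have hden2 : (0:ℝ) < 1 + 2 * (b + a + b' + a') := by positivity
    rw [div_mul_eq_mul_div, le_div_iff₀ hden1] at h1
    rw [div_mul_eq_mul_div, le_div_iff₀ hden2] at h2
    simp only [hD]
    have hmul1 : (c + d) * (a + b) ≤ (a' + a + b' + b) * (a + b) := by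
      apply mul_le_mul_of_nonneg_right _ (by linarith)
      linarith
    nlinarith [h1, h2, hmul1, mul_nonneg (add_nonneg ha0 hb0) (add_nonneg ha'0 hb'0)]
  -- step distances are nonincreasing
  have hdec : ∀ n, D (n + 1) ≤ D n := by
    intro n
    nlinarith [hkey n, hDnonneg n, hDnonneg (n + 1), sq_nonneg (D n - D (n + 1)),
      sq_nonneg (D n + D (n + 1))]
  have hle0 : ∀ n, D n ≤ D 0 := by
    intro n
    induction n with
    | zero => exact le_refl _
    | succ n ih => exact le_trans (hdec n) ih
  -- geometric decay
  set r : ℝ := 4 * D 0 / (1 + 4 * D 0) with hr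
  have hD00 : 0 ≤ D 0 := hDnonneg 0
  have hrden : (0:ℝ) < 1 + 4 * D 0 := by linarith
  have hr0 : 0 ≤ r := by positivity
  have hr1 : r < 1 := by
    rw [hr, div_lt_one hrden]; linarith
  have hgeo : ∀ n, D (n + 1) ≤ r * D n := by
    intro n
    rw [hr, div_mul_eq_mul_div, le_div_iff₀ hrden]
    have h1 := hkey n
    have h2 := hdec n
    have h3 := hle0 n
    have h4 : D n + D (n + 1) ≤ 2 * D 0 := by linarith
    have h5 : 0 ≤ D n - D (n + 1) := by linarith
    nlinarith [mul_le_mul_of_nonneg_right h4 h5, hDnonneg n, hDnonneg (n + 1)]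
  have hpow : ∀ n, D n ≤ D 0 * r ^ n := by
    intro n
    induction n with
    | zero => simp
    | succ n ih =>
      calc D (n + 1) ≤ r * D n := hgeo n
        _ ≤ r * (D 0 * r ^ n) := by exact mul_le_mul_of_nonneg_left ih hr0
        _ = D 0 * r ^ (n + 1) := by ring
  -- Cauchy sequences
  have hcx : CauchySeq xs := by
    apply cauchySeq_of_le_geometric r (D 0) hr1
    intro n
    calc dist (xs n) (xs (n + 1)) = dist (xs (n + 1)) (xs n) := dist_comm _ _
      _ ≤ D n := by have : (0:ℝ) ≤ dist (ys (n + 1)) (ys n) := dist_nonneg; simp only [hD]; linarith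
      _ ≤ D 0 * r ^ n := hpow n
  have hcy : CauchySeq ys := by
    apply cauchySeq_of_le_geometric r (D 0) hr1
    intro n
    calc dist (ys n) (ys (n + 1)) = dist (ys (n + 1)) (ys n) := dist_comm _ _
      _ ≤ D n := by have : (0:ℝ) ≤ dist (xs (n + 1)) (xs n) := dist_nonneg; simp only [hD]; linarith
      _ ≤ D 0 * r ^ n := hpow n
  obtain ⟨a, hA⟩ := cauchySeq_tendsto_of_complete hcx
  obtain ⟨b, hB⟩ := cauchySeq_tendsto_of_complete hcy
  refine ⟨a, b, ?_, ?_⟩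
  · have h1 : Filter.Tendsto (fun n => F (xs n) (ys n)) Filter.atTop (nhds (F a b)) :=
      (hcont.tendsto (a, b)).comp (hA.prodMk_nhds hB)
    have h2 : Filter.Tendsto (fun n => xs (n + 1)) Filter.atTop (nhds a) :=
      hA.comp (Filter.tendsto_add_atTop_nat 1)
    simp only [hx] at h2
    exact tendsto_nhds_unique h1 h2
  · have h1 : Filter.Tendsto (fun n => F (ys n) (xs n)) Filter.atTop (nhds (F b a)) :=
      (hcont.tendsto (b, a)).comp (hB.prodMk_nhds hA)
    have h2 : Filter.Tendsto (fun n => ys (n + 1)) Filter.atTop (nhds b) :=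
      hB.comp (Filter.tendsto_add_atTop_nat 1)
    simp only [hy] at h2
    exact tendsto_nhds_unique h1 h2
end

section
/- Let (X, ≤) be a partially ordered set equipped with a metric d, and let F : X × X → X have the mixed monotone property on X and satisfy, for all x, y, u, v ∈ X with x ≥ u and y ≤ v, d(F(x,y), F(u,v)) ≤ δ(x,y,u,v) · [d(x,u) + d(y,v)], where δ(x,y,u,v) = [d(x,F(u,v)) + d(y,F(v,u)) + d(u,F(x,y)) + d(v,F(y,x))] / (1 + 2[d(x,F(x,y)) + d(y,F(y,x)) + d(u,F(u,v)) + d(v,F(v,u))]). Suppose x₀, y₀ ∈ X satisfy x₀ ≤ F(x₀, y₀) and y₀ ≥ F(y₀, x₀), and define x_{n+1} = F(x_n, y_n), y_{n+1} = F(y_n, x_n). Then for every n ≥ 1, d(x_{n+1}, x_n) + d(y_{n+1}, y_n) ≤ β_n · [d(x_n, x_{n-1}) + d(y_n, y_{n-1})], where β_n = 2 · [d(x_{n-1},x_n) + d(x_n,x_{n+1}) + d(y_{n-1},y_n) + d(y_n,y_{n+1})] / (1 + 2[d(x_n,x_{n+1}) + d(y_n,y_{n+1}) + d(x_{n-1},x_n)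 + d(y_{n-1},y_n)]). -/
/-- For the iterates of a mixed-monotone mapping satisfying the
rational-type contractive condition, the successive-distance sums satisfy
`d(x_{n+1},x_n) + d(y_{n+1},y_n) ≤ β_n · [d(x_n,x_{n-1}) + d(y_n,y_{n-1})]`. -/
theorem iterates_successive_distance_bound
    {X : Type*} [MetricSpace X] [PartialOrder X]
    (F : X → X → X)
    (hmono : ∀ y : X, Monotone fun x => F x y)
    (hanti : ∀ x : X, Antitone fun y => F x y)
    (hF : ∀ x y u v : X, u ≤ x → y ≤ v →
      dist (F x y) (F u v) ≤
        (dist x (F u v) + dist y (F v u) + dist u (F x y) + dist v (F y x)) /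
          (1 + 2 * (dist x (F x y) + dist y (F y x) + dist u (F u v) + dist v (F v u))) *
        (dist x u + dist y v))
    (x y : ℕ → X)
    (hx : ∀ n, x (n + 1) = F (x n) (y n))
    (hy : ∀ n, y (n + 1) = F (y n) (x n))
    (hx0 : x 0 ≤ F (x 0) (y 0))
    (hy0 : F (y 0) (x 0) ≤ y 0) :
    ∀ n : ℕ, 1 ≤ n →
      dist (x (n + 1)) (x n) + dist (y (n + 1)) (y n) ≤
        (2 * (dist (x (n - 1)) (x n) + dist (x n) (x (n + 1)) +
              dist (y (n - 1)) (y n) + dist (y n) (y (n + 1))) /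
          (1 + 2 * (dist (x n) (x (n + 1)) + dist (y n) (y (n + 1)) +
                    dist (x (n - 1)) (x n) + dist (y (n - 1)) (y n)))) *
        (dist (x n) (x (n - 1)) + dist (y n) (y (n - 1))) := by

  have key : ∀ n, x n ≤ x (n + 1) ∧ y (n + 1) ≤ y n := by
    intro n
    induction n with
    | zero => exact ⟨by rw [hx]; exact hx0, by rw [hy]; exact hy0⟩
    | succ m ih =>
      refine ⟨?_, ?_⟩
      · rw [hx, hx]
        exact le_trans (hmono (y m) ih.1) (hanti (x (m + 1)) ih.2)
      · calc y (m + 1 + 1) = F (y (m + 1)) (x (m + 1)) := hy _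
          _ ≤ F (y m) (x (m + 1)) := hmono (x (m + 1)) ih.2
          _ ≤ F (y m) (x m) := hanti (y m) ih.1
          _ = y (m + 1) := (hy m).symm
  intro n hn
  obtain ⟨m, rfl⟩ : ∃ m, n = m + 1 := ⟨n - 1, (Nat.succ_pred_eq_of_pos hn).symm⟩
  simp only [Nat.add_sub_cancel]
  have h1 := hF (x (m + 1)) (y (m + 1)) (x m) (y m) (key m).1 (key m).2
  have h2 := hF (y m) (x m) (y (m + 1)) (x (m + 1)) (key m).2 (key m).1
  simp only [← hx, ← hy, dist_self] at h1 h2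
  simp only [dist_comm (x (m + 1 + 1)) (x (m + 1)), dist_comm (y (m + 1 + 1)) (y (m + 1)),
    dist_comm (x (m + 1)) (x m), dist_comm (y (m + 1)) (y m)] at h1 h2 ⊢
  set a := dist (x m) (x (m + 1)) with ha
  set b := dist (x (m + 1)) (x (m + 1 + 1)) with hb
  set c := dist (y m) (y (m + 1)) with hc
  set d := dist (y (m + 1)) (y (m + 1 + 1)) with hd
  set e := dist (x m) (x (m + 1 + 1)) with he
  set f := dist (y m) (y (m + 1 + 1)) with hf
  have hae : e ≤ a + b := dist_triangle _ _ _
  have hcf : f ≤ c + d := dist_triangle _ _ _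
  have ha0 : (0:ℝ) ≤ a := dist_nonneg
  have hb0 : (0:ℝ) ≤ b := dist_nonneg
  have hc0 : (0:ℝ) ≤ c := dist_nonneg
  have hd0 : (0:ℝ) ≤ d := dist_nonneg
  have hD : (0:ℝ) < 1 + 2 * (b + d + a + c) := by positivity
  have hD2 : (0:ℝ) < 1 + 2 * (c + a + d + b) := by positivity
  have hDeq : (1 + 2 * (c + a + d + b)) = (1 + 2 * (b + d + a + c)) := by ring
  rw [hDeq] at h2
  rw [div_mul_eq_mul_div, le_div_iff₀ hD] at h1 h2
  rw [div_mul_eq_mul_div, le_div_iff₀ hD]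
  nlinarith [mul_le_mul_of_nonneg_right (add_le_add hae hcf) (by positivity : (0:ℝ) ≤ a + c)]
end

section
/- Let (X, ≤) be a partially ordered set equipped with a metric d, and let F : X × X → X have the mixed monotone property on X and satisfy, for all x, y, u, v ∈ X with x ≥ u and y ≤ v, d(F(x,y), F(u,v)) ≤ δ(x,y,u,v) · [d(x,u) + d(y,v)], where δ(x,y,u,v) = [d(x,F(u,v)) + d(y,F(v,u)) + d(u,F(x,y)) + d(v,F(y,x))] / (1 + 2[d(x,F(x,y)) + d(y,F(y,x)) + d(u,F(u,v)) + d(v,F(v,u))]). Suppose x₀, y₀ ∈ X satisfy x₀ ≤ F(x₀, y₀) and y₀ ≥ F(y₀, x₀), define x_{n+1} = F(x_n, y_n), y_{n+1} = F(y_n, x_n), and assume β₁ < 1, where β₁ = 2 · [d(x₀,x₁) + d(x₁,x₂) + d(y₀,y₁) + d(y₁,y₂)] / (1 + 2[d(x₁,x₂) + d(y₁,y₂) + d(x₀,x₁) + d(y₀,y₁)]). Then lim_{n→∞} [d(x_{n+1}, x_n) + d(y_{n+1}, y_n)] = 0. -/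
open Filter Topology

/-- For the iterates of a mixed-monotone mapping satisfying the
rational-type contractive condition, if `β₁ < 1` then
`d(x_{n+1},x_n) + d(y_{n+1},y_n) → 0` as `n → ∞`. -/
theorem iterates_successive_distances_tendsto_zero
    {X : Type*} [MetricSpace X] [PartialOrder X]
    (F : X → X → X)
    (hmono : ∀ y : X, Monotone fun x => F x y)
    (hanti : ∀ x : X, Antitone fun y => F x y)
    (hF : ∀ x y u v : X, u ≤ x → y ≤ v →
      dist (F x y) (F u v) ≤
        (dist x (F u v) + dist y (F v u) + dist u (F x y) + dist v (F y x)) /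
          (1 + 2 * (dist x (F x y) + dist y (F y x) + dist u (F u v) + dist v (F v u))) *
        (dist x u + dist y v))
    (x y : ℕ → X)
    (hx : ∀ n, x (n + 1) = F (x n) (y n))
    (hy : ∀ n, y (n + 1) = F (y n) (x n))
    (hx0 : x 0 ≤ F (x 0) (y 0))
    (hy0 : F (y 0) (x 0) ≤ y 0)
    (hβ₁ : 2 * (dist (x 0) (x 1) + dist (x 1) (x 2) + dist (y 0) (y 1) + dist (y 1) (y 2)) /
        (1 + 2 * (dist (x 1) (x 2) + dist (y 1) (y 2) +
                  dist (x 0) (x 1) + dist (y 0) (y 1))) < 1) :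
    Tendsto (fun n => dist (x (n + 1)) (x n) + dist (y (n + 1)) (y n)) atTop (𝓝 0) := by
  obtain ⟨D, hD⟩ : ∃ D : ℕ → ℝ,
      ∀ n, D n = dist (x (n + 1)) (x n) + dist (y (n + 1)) (y n) := ⟨_, fun _ => rfl⟩
  have hDnn : ∀ n, 0 ≤ D n := by
    intro n; rw [hD n]; exact add_nonneg dist_nonneg dist_nonneg
  have hord : ∀ n, x n ≤ x (n + 1) ∧ y (n + 1) ≤ y n := by
    intro n
    induction n with
    | zero =>
      refine ⟨?_, ?_⟩
      · rw [hx 0]; exact hx0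
      · rw [hy 0]; exact hy0
    | succ n ih =>
      refine ⟨?_, ?_⟩
      · rw [hx n, hx (n + 1)]
        exact le_trans (hmono (y n) ih.1) (hanti (x (n + 1)) ih.2)
      · rw [hy (n + 1)]
        exact le_trans (le_trans (hmono (x (n + 1)) ih.2) (hanti (y n) ih.1)) (hy n).ge
  have key : ∀ n, D (n + 1) ≤
      2 * (D n + D (n + 1)) / (1 + 2 * (D n + D (n + 1))) * D n := by
    intro n
    have h1 := hF (x (n + 1)) (y (n + 1)) (x n) (y n) (hord n).1 (hord n).2
    have h2 := hF (y n) (x n) (y (n + 1)) (x (n + 1)) (hord n).2 (hord n).1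
    rw [← hx n, ← hy n, ← hx (n + 1), ← hy (n + 1)] at h1 h2
    simp only [dist_self, zero_add, add_zero] at h1 h2
    rw [hD n, hD (n + 1)]
    rw [dist_comm (x n) (x (n + 1)), dist_comm (y n) (y (n + 1)),
      dist_comm (x (n + 1)) (x (n + 1 + 1)), dist_comm (y (n + 1)) (y (n + 1 + 1)),
      dist_comm (x n) (x (n + 1 + 1)), dist_comm (y n) (y (n + 1 + 1))] at h1
    rw [dist_comm (x n) (x (n + 1)), dist_comm (y n) (y (n + 1)),
      dist_comm (x (n + 1)) (x (n + 1 + 1)), dist_comm (y (n + 1)) (y (n + 1 + 1)),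
      dist_comm (x n) (x (n + 1 + 1)), dist_comm (y n) (y (n + 1 + 1))] at h2
    set a := dist (x (n + 1)) (x n) with ha
    set b := dist (y (n + 1)) (y n) with hb
    set a' := dist (x (n + 1 + 1)) (x (n + 1)) with ha'
    set b' := dist (y (n + 1 + 1)) (y (n + 1)) with hb'
    set dA := dist (x (n + 1 + 1)) (x n) with hdA
    set dB := dist (y (n + 1 + 1)) (y n) with hdB
    have t1 : dA ≤ a' + a := dist_triangle (x (n + 1 + 1)) (x (n + 1)) (x n)
    have t2 : dB ≤ b' + b := dist_triangle (y (n + 1 + 1)) (y (n + 1)) (y n)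
    have hna : 0 ≤ a := dist_nonneg
    have hnb : 0 ≤ b := dist_nonneg
    have hna' : 0 ≤ a' := dist_nonneg
    have hnb' : 0 ≤ b' := dist_nonneg
    rw [div_mul_eq_mul_div, le_div_iff₀ (by positivity)] at h1
    rw [div_mul_eq_mul_div, le_div_iff₀ (by positivity)] at h2
    rw [div_mul_eq_mul_div, le_div_iff₀ (by positivity)]
    have t3 : (dA + dB) * (a + b) ≤ (a + a' + b + b') * (a + b) :=
      mul_le_mul_of_nonneg_right (by linarith) (by linarith)
    nlinarith [h1, h2, t3]
  have hdec : ∀ n, D (n + 1) ≤ D n := by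
    intro n
    have h := key n
    have hS : 0 ≤ D n + D (n + 1) := add_nonneg (hDnn n) (hDnn (n + 1))
    have hfle : 2 * (D n + D (n + 1)) / (1 + 2 * (D n + D (n + 1))) ≤ 1 := by
      rw [div_le_one (by linarith)]; linarith
    calc D (n + 1) ≤ _ * D n := h
      _ ≤ 1 * D n := mul_le_mul_of_nonneg_right hfle (hDnn n)
      _ = D n := one_mul _
  have hle0 : ∀ n, D n ≤ D 0 := by
    intro n
    induction n with
    | zero => exact le_refl _
    | succ n ih => exact (hdec n).trans ih
  have hle1 : ∀ n, D (n + 1) ≤ D 1 := by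
    intro n
    induction n with
    | zero => exact le_refl _
    | succ n ih => exact (hdec (n + 1)).trans ih
  have hβlt : 2 * (D 0 + D 1) / (1 + 2 * (D 0 + D 1)) < 1 := by
    have e : 2 * (D 0 + D 1) / (1 + 2 * (D 0 + D 1)) =
        2 * (dist (x 0) (x 1) + dist (x 1) (x 2) + dist (y 0) (y 1) + dist (y 1) (y 2)) /
        (1 + 2 * (dist (x 1) (x 2) + dist (y 1) (y 2) +
                  dist (x 0) (x 1) + dist (y 0) (y 1))) := by
      rw [hD 0, hD 1]
      rw [show (0 : ℕ) + 1 = 1 from rfl, show (1 : ℕ) + 1 = 2 from rfl]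
      rw [dist_comm (x 1) (x 0), dist_comm (y 1) (y 0),
        dist_comm (x 2) (x 1), dist_comm (y 2) (y 1)]
      ring
    rw [e]; exact hβ₁
  set β := 2 * (D 0 + D 1) / (1 + 2 * (D 0 + D 1)) with hβ
  have hS0 : 0 ≤ D 0 + D 1 := add_nonneg (hDnn 0) (hDnn 1)
  have hβnn : 0 ≤ β := div_nonneg (by linarith) (by linarith)
  have hcon : ∀ n, D (n + 1) ≤ β * D n := by
    intro n
    have hSn : 0 ≤ D n + D (n + 1) := add_nonneg (hDnn n) (hDnn (n + 1))
    have hSle : D n + D (n + 1) ≤ D 0 + D 1 := add_le_add (hle0 n) (hle1 n)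
    have hmf : 2 * (D n + D (n + 1)) / (1 + 2 * (D n + D (n + 1))) ≤ β := by
      rw [hβ, div_le_div_iff₀ (by linarith) (by linarith)]
      nlinarith
    calc D (n + 1) ≤ _ * D n := key n
      _ ≤ β * D n := mul_le_mul_of_nonneg_right hmf (hDnn n)
  have hgeom : ∀ n, D n ≤ β ^ n * D 0 := by
    intro n
    induction n with
    | zero => simp
    | succ n ih =>
      calc D (n + 1) ≤ β * D n := hcon n
        _ ≤ β * (β ^ n * D 0) := mul_le_mul_of_nonneg_left ih hβnn
        _ = β ^ (n + 1) * D 0 := by ring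
  have h0 : Tendsto (fun n => β ^ n * D 0) atTop (𝓝 0) := by
    have := (tendsto_pow_atTop_nhds_zero_of_lt_one hβnn hβlt).mul_const (D 0)
    simpa using this
  exact Tendsto.congr hD (squeeze_zero hDnn hgeom h0)
end

section
/- Let (X, ≤) be a partially ordered set equipped with a metric d such that (X, d) is a complete metric space. Let F : X × X → X be a continuous mapping having the mixed monotone property on X, and assume there exists a constant k ∈ [0,1) such that d(F(x,y), F(u,v)) ≤ (k/2)[d(x,u) + d(y,v)] for all x, y, u, v ∈ X with x ≥ u and y ≤ v. If there exist x₀, y₀ ∈ X such that x₀ ≤ F(x₀, y₀) and y₀ ≥ F(y₀, x₀), then there exist x, y ∈ X such that x = F(x,y) and y = F(y,x). -/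
/-- Bhaskar–Lakshmikantham coupled fixed point theorem: a continuous
mixed-monotone mapping `F` on a partially ordered complete metric space satisfying
`d(F(x,y),F(u,v)) ≤ (k/2)[d(x,u)+d(y,v)]` for comparable pairs, with `k ∈ [0,1)`,
has a coupled fixed point provided `x₀ ≤ F(x₀,y₀)` and `y₀ ≥ F(y₀,x₀)`. -/
theorem bhaskar_lakshmikantham_coupled_fixed_point
    {X : Type*} [MetricSpace X] [CompleteSpace X] [PartialOrder X]
    (F : X → X → X)
    (hcont : Continuous fun p : X × X => F p.1 p.2)
    (hmono : ∀ y : X, Monotone fun x => F x y)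
    (hanti : ∀ x : X, Antitone fun y => F x y)
    (k : ℝ) (hk0 : 0 ≤ k) (hk1 : k < 1)
    (hF : ∀ x y u v : X, u ≤ x → y ≤ v →
      dist (F x y) (F u v) ≤ k / 2 * (dist x u + dist y v))
    (x₀ y₀ : X) (hx₀ : x₀ ≤ F x₀ y₀) (hy₀ : F y₀ x₀ ≤ y₀) :
    ∃ x y : X, F x y = x ∧ F y x = y := by
  -- iterated sequence
  let s : ℕ → X × X := fun n => Nat.rec (x₀, y₀) (fun _ p => (F p.1 p.2, F p.2 p.1)) n
  have hss : ∀ n, s (n + 1) = (F (s n).1 (s n).2, F (s n).2 (s n).1) := fun n => rfl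
  -- monotonicity of the chain
  have hchain : ∀ n, (s n).1 ≤ (s (n + 1)).1 ∧ (s (n + 1)).2 ≤ (s n).2 := by
    intro n
    induction n with
    | zero => exact ⟨hx₀, hy₀⟩
    | succ n ih =>
      refine ⟨?_, ?_⟩
      · calc (s (n+1)).1 = F (s n).1 (s n).2 := by rw [hss]
          _ ≤ F (s (n+1)).1 (s n).2 := hmono _ ih.1
          _ ≤ F (s (n+1)).1 (s (n+1)).2 := hanti _ ih.2
          _ = (s (n+2)).1 := by rw [hss]
      · calc (s (n+2)).2 = F (s (n+1)).2 (s (n+1)).1 := by rw [hss]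
          _ ≤ F (s n).2 (s (n+1)).1 := hmono _ ih.2
          _ ≤ F (s n).2 (s n).1 := hanti _ ih.1
          _ = (s (n+1)).2 := by rw [hss]
  -- combined step distance
  set D : ℕ → ℝ := fun n => dist (s (n + 1)).1 (s n).1 + dist (s (n + 1)).2 (s n).2 with hD
  have hDstep : ∀ n, D (n + 1) ≤ k * D n := by
    intro n
    have h1 : dist (s (n+2)).1 (s (n+1)).1 ≤
        k / 2 * (dist (s (n+1)).1 (s n).1 + dist (s (n+1)).2 (s n).2) := by
      have := hF (s (n+1)).1 (s (n+1)).2 (s n).1 (s n).2 (hchain n).1 (hchain n).2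
      rw [hss (n+1), hss n]
      simpa [dist_comm] using this
    have h2 : dist (s (n+2)).2 (s (n+1)).2 ≤
        k / 2 * (dist (s (n+1)).2 (s n).2 + dist (s (n+1)).1 (s n).1) := by
      have := hF (s n).2 (s n).1 (s (n+1)).2 (s (n+1)).1 (hchain n).2 (hchain n).1
      rw [hss (n+1), hss n]
      calc dist (F (s (n+1)).2 (s (n+1)).1) (F (s n).2 (s n).1)
          = dist (F (s n).2 (s n).1) (F (s (n+1)).2 (s (n+1)).1) := dist_comm _ _
        _ ≤ k / 2 * (dist (s n).2 (s (n+1)).2 + dist (s n).1 (s (n+1)).1) := this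
        _ = k / 2 * (dist (s (n+1)).2 (s n).2 + dist (s (n+1)).1 (s n).1) := by
            rw [dist_comm ((s n).2), dist_comm ((s n).1)]
    simp only [hD]
    linarith
  have hDnonneg : ∀ n, 0 ≤ D n := fun n => by positivity
  have hDgeo : ∀ n, D n ≤ k ^ n * D 0 := by
    intro n
    induction n with
    | zero => simp
    | succ n ih =>
      calc D (n + 1) ≤ k * D n := hDstep n
        _ ≤ k * (k ^ n * D 0) := by
            exact mul_le_mul_of_nonneg_left ih hk0
        _ = k ^ (n + 1) * D 0 := by ring
  -- Cauchy sequences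
  have hc1 : CauchySeq fun n => (s n).1 := by
    apply cauchySeq_of_le_geometric k (D 0) hk1
    intro n
    calc dist (s n).1 (s (n+1)).1 = dist (s (n+1)).1 (s n).1 := dist_comm _ _
      _ ≤ D n := by simp only [hD]; exact le_add_of_nonneg_right dist_nonneg
      _ ≤ k ^ n * D 0 := hDgeo n
      _ = D 0 * k ^ n := by ring
  have hc2 : CauchySeq fun n => (s n).2 := by
    apply cauchySeq_of_le_geometric k (D 0) hk1
    intro n
    calc dist (s n).2 (s (n+1)).2 = dist (s (n+1)).2 (s n).2 := dist_comm _ _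
      _ ≤ D n := by simp only [hD]; exact le_add_of_nonneg_left dist_nonneg
      _ ≤ k ^ n * D 0 := hDgeo n
      _ = D 0 * k ^ n := by ring
  obtain ⟨x, hx⟩ := cauchySeq_tendsto_of_complete hc1
  obtain ⟨y, hy⟩ := cauchySeq_tendsto_of_complete hc2
  refine ⟨x, y, ?_, ?_⟩
  · have hpair : Filter.Tendsto (fun n => ((s n).1, (s n).2)) Filter.atTop (nhds (x, y)) :=
      hx.prodMk_nhds hy
    have hFt : Filter.Tendsto (fun n => F (s n).1 (s n).2) Filter.atTop (nhds (F x y)) :=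
      (hcont.tendsto (x, y)).comp hpair
    have hshift : Filter.Tendsto (fun n => (s (n + 1)).1) Filter.atTop (nhds x) :=
      hx.comp (Filter.tendsto_add_atTop_nat 1)
    have : (fun n => F (s n).1 (s n).2) = fun n => (s (n + 1)).1 := by
      funext n; rw [hss]
    rw [this] at hFt
    exact tendsto_nhds_unique hFt hshift
  · have hpair : Filter.Tendsto (fun n => ((s n).2, (s n).1)) Filter.atTop (nhds (y, x)) :=
      hy.prodMk_nhds hx
    have hFt : Filter.Tendsto (fun n => F (s n).2 (s n).1) Filter.atTop (nhds (F y x)) :=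
      (hcont.tendsto (y, x)).comp hpair
    have hshift : Filter.Tendsto (fun n => (s (n + 1)).2) Filter.atTop (nhds y) :=
      hy.comp (Filter.tendsto_add_atTop_nat 1)
    have : (fun n => F (s n).2 (s n).1) = fun n => (s (n + 1)).2 := by
      funext n; rw [hss]
    rw [this] at hFt
    exact tendsto_nhds_unique hFt hshift
end
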